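/- arXiv:1404.2390 — 3 statements merged into one kernel-verified Lean document; each statement's English description precedes it below -/
import Mathlib

section
/- Let V be an n-dimensional inner product space (n ≥ 2) with orthonormal basis e_0 (radial direction) and e_1,…,e_{n-1}. Let a, b ≥ 0 and define the curvature form acting on diagonal symmetric 2-tensors h by Rm(h,h) = 2a h_{00} Σ_{i≥1} h_{ii} + b((Σ_{i≥1} h_{ii})² − Σ_{i≥1} h_{ii}²) and R = 2(n−1)a + (n−1)(n−2)b. Then R|h|² − 2Rm(h,h) ≥ 2√(n−1)(√(n−1)−1) a |h|² + (n−2)(n−3) b Σ_{i≥1} h_{ii}², where |h|² = Σ_i h_{ii}². In particular, for n ≥ 3, R|h|² − 2Rm(h,h) ≥ 0. -/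
open Finset

/-- pointwise algebraic curvature estimate for rotationally
symmetric metrics. With `a` the radial and `b` the spherical sectional
curvatures (both `≥ 0`), `h` a diagonal symmetric 2-tensor with radial entry
`h 0`, `R = 2(n-1)a + (n-1)(n-2)b` and
`Rm(h,h) = 2a h₀ Σ_{i≥1} h_i + b((Σ_{i≥1} h_i)² − Σ_{i≥1} h_i²)`, one has
`R|h|² − 2Rm(h,h) ≥ 2√(n-1)(√(n-1)−1) a |h|² + (n-2)(n-3) b Σ_{i≥1} h_i²`,
and in particular `R|h|² − 2Rm(h,h) ≥ 0` for `n ≥ 3`. -/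
theorem stmt8 (n : ℕ) (hn : 2 ≤ n) (a b : ℝ) (ha : 0 ≤ a) (hb : 0 ≤ b)
    (h : Fin n → ℝ) :
    ((2 * ((n : ℝ) - 1) * a + ((n : ℝ) - 1) * ((n : ℝ) - 2) * b)
        * (∑ i, (h i) ^ 2)
      - 2 * (2 * a * h ⟨0, by omega⟩ * (∑ i ∈ Finset.univ.erase ⟨0, by omega⟩, h i)
          + b * ((∑ i ∈ Finset.univ.erase ⟨0, by omega⟩, h i) ^ 2
              - ∑ i ∈ Finset.univ.erase ⟨0, by omega⟩, (h i) ^ 2))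
      ≥ 2 * Real.sqrt ((n : ℝ) - 1) * (Real.sqrt ((n : ℝ) - 1) - 1) * a
            * (∑ i, (h i) ^ 2)
        + ((n : ℝ) - 2) * ((n : ℝ) - 3) * b
            * (∑ i ∈ Finset.univ.erase ⟨0, by omega⟩, (h i) ^ 2))
    ∧ (3 ≤ n →
      0 ≤ (2 * ((n : ℝ) - 1) * a + ((n : ℝ) - 1) * ((n : ℝ) - 2) * b)
            * (∑ i, (h i) ^ 2)
        - 2 * (2 * a * h ⟨0, by omega⟩ * (∑ i ∈ Finset.univ.erase ⟨0, by omega⟩, h i)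
            + b * ((∑ i ∈ Finset.univ.erase ⟨0, by omega⟩, h i) ^ 2
                - ∑ i ∈ Finset.univ.erase ⟨0, by omega⟩, (h i) ^ 2))) := by
  set z : Fin n := ⟨0, by omega⟩ with hz
  set h0 : ℝ := h z with hh0
  set S : ℝ := ∑ i ∈ Finset.univ.erase z, h i with hS
  set Q : ℝ := ∑ i ∈ Finset.univ.erase z, (h i) ^ 2 with hQ
  have hQ0 : 0 ≤ Q := Finset.sum_nonneg fun i _ => sq_nonneg _
  have hcard : ((Finset.univ.erase z).card : ℝ) = (n : ℝ) - 1 := by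
    rw [Finset.card_erase_of_mem (Finset.mem_univ _), Finset.card_univ, Fintype.card_fin]
    have h1 : 1 ≤ n := by omega
    rw [Nat.cast_sub h1, Nat.cast_one]
  have hCS : S ^ 2 ≤ ((n : ℝ) - 1) * Q := by
    rw [← hcard, hS, hQ]
    exact sq_sum_le_card_mul_sum_sq
  have htot : (∑ i, (h i) ^ 2) = h0 ^ 2 + Q := by
    rw [hQ, hh0, ← Finset.add_sum_erase _ _ (Finset.mem_univ z)]
  set s : ℝ := Real.sqrt ((n : ℝ) - 1) with hs
  have hn1 : (1 : ℝ) ≤ (n : ℝ) - 1 := by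
    have : (2 : ℝ) ≤ n := by exact_mod_cast hn
    linarith
  have hs2 : s ^ 2 = (n : ℝ) - 1 := Real.sq_sqrt (by linarith)
  have hs1 : 1 ≤ s := by
    rw [show (1:ℝ) = Real.sqrt 1 by simp [Real.sqrt_one]]
    exact Real.sqrt_le_sqrt hn1
  have haP : 0 ≤ a * (2 * s * (h0 ^ 2 + Q) - 4 * h0 * S) := by
    apply mul_nonneg ha
    nlinarith [sq_nonneg (s * h0 - S), hCS, hs2, hs1, hQ0]
  have hbP : 0 ≤ b * (((n:ℝ)-1) * ((n:ℝ)-2) * h0 ^ 2 + 2 * ((n:ℝ)-1) * Q - 2 * S ^ 2) := by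
    apply mul_nonneg hb
    nlinarith [hCS, hn1, hQ0,
      mul_nonneg (mul_nonneg (by linarith : (0:ℝ) ≤ (n:ℝ) - 1) (by linarith : (0:ℝ) ≤ (n:ℝ) - 2)) (sq_nonneg h0)]
  have main : (2 * ((n : ℝ) - 1) * a + ((n : ℝ) - 1) * ((n : ℝ) - 2) * b) * (h0 ^ 2 + Q)
      - 2 * (2 * a * h0 * S + b * (S ^ 2 - Q))
      ≥ 2 * s * (s - 1) * a * (h0 ^ 2 + Q) + ((n : ℝ) - 2) * ((n : ℝ) - 3) * b * Q := by
    nlinarith [haP, hbP, hs2, mul_nonneg ha (add_nonneg (sq_nonneg h0) hQ0)]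
  constructor
  · rw [htot]; exact main
  · intro hn3
    have hn3' : (3 : ℝ) ≤ n := by exact_mod_cast hn3
    have r1 : 0 ≤ 2 * s * (s - 1) * a * (h0 ^ 2 + Q) := by
      have := add_nonneg (sq_nonneg h0) hQ0
      have hs0 : 0 ≤ s := by linarith
      have : 0 ≤ s - 1 := by linarith
      positivity
    have r2 : 0 ≤ ((n : ℝ) - 2) * ((n : ℝ) - 3) * b * Q := by
      apply mul_nonneg (mul_nonneg (mul_nonneg (by linarith) (by linarith)) hb) hQ0
    rw [htot]
    linarith
end

section
/- For real numbers (h_{ij})_{1≤i,j≤3} forming a symmetric 3×3 matrix h and a symmetric 3×3 matrix Ric with trace R, the quantity |h|²|Ric|² − 2R·tr(h)·⟨Ric,h⟩ + 2R⟨Ric, h²⟩ + (R²/2)((tr h)² − |h|²) is nonnegative, where ⟨·,·⟩ is the Frobenius inner product and h² is the matrix square. -/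
/-!
The quantity is a polynomial in traces of products of `h` and `Ric`, hence invariant under a
simultaneous orthogonal change of basis, so we may take `Ric = diag(a, b, c)`. Then each
off-diagonal entry `hᵢⱼ` only contributes `hᵢⱼ²` times a positive definite quadratic form in
`a, b, c`, and the remaining form in the diagonal entries `x, y, z` of `h` is half a sum of four
squares of bilinear forms in `(a, b, c)` and `(x, y, z)`. Its Gram matrix is the only one that
vanishes on the zeros `a = b = c, x = y = z` and `(a, b, c) = (x, y, z) = (1, 1, 0)` (up to a
simultaneous permutation) of the form.
-/

open Matrix Unitary

namespace Matrix

variable {n : Type*} [Fintype n]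

lemma sum_sum_mul_eq_trace_mul {α : Type*} [NonUnitalNonAssocSemiring α] (A : Matrix n n α)
    {B : Matrix n n α} (hB : B.IsSymm) : ∑ i, ∑ j, A i j * B i j = trace (A * B) := by
  simp only [trace, diag, mul_apply, hB.apply]

lemma sum_sum_sq_eq_trace_mul_self {α : Type*} [Semiring α] {A : Matrix n n α}
    (hA : A.IsSymm) : ∑ i, ∑ j, A i j ^ 2 = trace (A * A) := by
  simp only [sq, sum_sum_mul_eq_trace_mul A hA]

lemma trace_conjStarAlgAut [DecidableEq n] {R S : Type*} [CommSemiring S] [CommSemiring R]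
    [StarRing R] [Algebra S R] (u : unitary (Matrix n n R)) (A : Matrix n n R) :
    trace (conjStarAlgAut S _ u A) = trace A := by
  rw [conjStarAlgAut_apply, trace_mul_cycle, coe_star_mul_self, one_mul]

end Matrix

variable {n : Type*} [Fintype n]

noncomputable def andersonChowForm (h Ric : Matrix n n ℝ) : ℝ :=
  trace (h * h) * trace (Ric * Ric) - 2 * trace Ric * trace h * trace (Ric * h)
    + 2 * trace Ric * trace (Ric * (h * h)) + trace Ric ^ 2 / 2 * (trace h ^ 2 - trace (h * h))

lemma andersonChowForm_conjStarAlgAut [DecidableEq n] (u : unitary (Matrix n n ℝ))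
    (h Ric : Matrix n n ℝ) :
    andersonChowForm (conjStarAlgAut ℝ _ u h) (conjStarAlgAut ℝ _ u Ric) =
      andersonChowForm h Ric := by
  simp only [andersonChowForm, ← map_mul, trace_conjStarAlgAut]

lemma andersonChowForm_diagonal_nonneg {g : Matrix (Fin 3) (Fin 3) ℝ} (hg : g.IsSymm)
    (d : Fin 3 → ℝ) : 0 ≤ andersonChowForm g (diagonal d) := by
  have hsos : andersonChowForm g (diagonal d) =
      (((d 0 + d 1) * g 2 2 - d 2 * (g 0 0 + g 1 1)) ^ 2
        + ((d 0 - d 1) * g 1 1 + d 2 * (g 2 2 - g 0 0)) ^ 2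
        + (d 0 * (g 0 0 - g 1 1 - g 2 2) + d 1 * (g 0 0 - g 1 1 + g 2 2)) ^ 2
        + ((d 0 - d 1) * g 0 0 + d 2 * (g 1 1 - g 2 2)) ^ 2) / 2
        + g 1 2 ^ 2 * (d 0 ^ 2 + 2 * d 1 ^ 2 + 2 * d 2 ^ 2 + (d 1 + d 2) ^ 2)
        + g 0 2 ^ 2 * (d 1 ^ 2 + 2 * d 0 ^ 2 + 2 * d 2 ^ 2 + (d 0 + d 2) ^ 2)
        + g 0 1 ^ 2 * (d 2 ^ 2 + 2 * d 0 ^ 2 + 2 * d 1 ^ 2 + (d 0 + d 1) ^ 2) := by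
    simp only [andersonChowForm, trace, Matrix.diag, mul_apply, diagonal_apply, Fin.sum_univ_three,
      hg.apply 0 1, hg.apply 0 2, hg.apply 1 2, Fin.reduceEq, if_true, if_false]
    ring
  rw [hsos]
  positivity

/-- Anderson–Chow algebraic inequality in dimension 3: for
symmetric 3×3 real matrices `h` and `Ric` with `R = tr Ric`,
`|h|²|Ric|² − 2R (tr h) ⟨Ric,h⟩ + 2R ⟨Ric,h²⟩ + (R²/2)((tr h)² − |h|²) ≥ 0`,
where `⟨·,·⟩` is the Frobenius inner product. -/
theorem stmt9 (h Ric : Matrix (Fin 3) (Fin 3) ℝ)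
    (hsymm : h.IsSymm) (hRsymm : Ric.IsSymm) :
    0 ≤ (∑ i, ∑ j, (h i j) ^ 2) * (∑ i, ∑ j, (Ric i j) ^ 2)
      - 2 * Ric.trace * h.trace * (∑ i, ∑ j, Ric i j * h i j)
      + 2 * Ric.trace * (∑ i, ∑ j, Ric i j * (h * h) i j)
      + Ric.trace ^ 2 / 2 * (h.trace ^ 2 - ∑ i, ∑ j, (h i j) ^ 2) := by
  have hh : (h * h).IsSymm := by rw [IsSymm, transpose_mul, hsymm]
  rw [sum_sum_sq_eq_trace_mul_self hsymm, sum_sum_sq_eq_trace_mul_self hRsymm,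
    sum_sum_mul_eq_trace_mul _ hsymm, sum_sum_mul_eq_trace_mul _ hh]
  change 0 ≤ andersonChowForm h Ric
  have hRic : Ric.IsHermitian := isHermitian_iff_isSymm.mpr hRsymm
  set φ := conjStarAlgAut ℝ _ hRic.eigenvectorUnitary
  have hg : (φ.symm h).IsSymm := by
    rw [← isHermitian_iff_isSymm, IsHermitian, ← star_eq_conjTranspose, ← map_star,
      star_eq_conjTranspose, isHermitian_iff_isSymm.mpr hsymm]
  rw [← φ.apply_symm_apply h, hRic.spectral_theorem, andersonChowForm_conjStarAlgAut]
  exact andersonChowForm_diagonal_nonneg hg _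
end

section
/- Let E be a normed space of tensors on a Riemannian manifold with the L^∞-interpolation inequality ‖∇T‖²_{L^∞} ≤ c₀ ‖T‖_{L^∞}(‖∇²T‖_{L^∞} + ‖∇T‖_{L^∞}) for all tensors T with the indicated norms finite. Suppose a family (T_t)_{t≥0} satisfies ‖T_t‖_{L^∞} ≤ A e^{−μt} and ‖∇^j T_t‖_{L^∞} ≤ C_j for all j ≥ 1 and t ≥ 1. Then for every k ≥ 1 and every λ_k ∈ (0, μ/2^k) there is a constant C such that ‖∇^k T_t‖_{L^∞} ≤ C e^{−λ_k t} for t ≥ 1. -/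
/-- iteration lemma for exponential decay of derivatives:
given seminorms `Nn j t = ‖∇ʲ T_t‖_{L^∞}` satisfying the interpolation
inequality `‖∇^{j+1}T‖² ≤ c₀‖∇ʲT‖(‖∇^{j+2}T‖ + ‖∇^{j+1}T‖)`, exponential
decay `Nn 0 t ≤ A e^{−μt}` and uniform bounds `Nn j t ≤ C_j` for `j ≥ 1`,
`t ≥ 1`, one gets: for every `k ≥ 1` and `λ_k ∈ (0, μ/2^k)` there is `C`
with `Nn k t ≤ C e^{−λ_k t}` for `t ≥ 1`. -/
theorem stmt18 (Nn : ℕ → ℝ → ℝ) (c0 A mu : ℝ)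
    (hc0 : 0 ≤ c0) (hA : 0 ≤ A) (hmu : 0 < mu)
    (hnonneg : ∀ j t, 0 ≤ Nn j t)
    (hinterp : ∀ (j : ℕ) (t : ℝ),
      (Nn (j + 1) t) ^ 2 ≤ c0 * Nn j t * (Nn (j + 2) t + Nn (j + 1) t))
    (hdecay : ∀ t : ℝ, Nn 0 t ≤ A * Real.exp (-mu * t))
    (hbound : ∀ j : ℕ, 1 ≤ j → ∃ Cj : ℝ, ∀ t : ℝ, 1 ≤ t → Nn j t ≤ Cj) :
    ∀ k : ℕ, 1 ≤ k → ∀ lamk : ℝ, 0 < lamk → lamk < mu / 2 ^ k →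
      ∃ Ck : ℝ, ∀ t : ℝ, 1 ≤ t → Nn k t ≤ Ck * Real.exp (-lamk * t) := by
  have key : ∀ k : ℕ, ∃ C : ℝ, 0 ≤ C ∧
      ∀ t : ℝ, 1 ≤ t → Nn k t ≤ C * Real.exp (-(mu / 2 ^ k) * t) := by
    intro k
    induction k with
    | zero =>
        refine ⟨A, hA, fun t _ => ?_⟩
        simpa using hdecay t
    | succ k ih =>
        obtain ⟨C, hC, h⟩ := ih
        obtain ⟨C1, hC1⟩ := hbound (k + 1) (by omega)
        obtain ⟨C2, hC2⟩ := hbound (k + 2) (by omega)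
        set D : ℝ := max C2 0 + max C1 0 with hD
        have hDnn : 0 ≤ D := by positivity
        refine ⟨Real.sqrt (c0 * C * D), Real.sqrt_nonneg _, fun t ht => ?_⟩
        have hexp : (0:ℝ) < Real.exp (-(mu / 2 ^ k) * t) := Real.exp_pos _
        have h1 : (Nn (k + 1) t) ^ 2 ≤ (c0 * C * D) * Real.exp (-(mu / 2 ^ k) * t) := by
          have := hinterp k t
          have hsum : Nn (k + 2) t + Nn (k + 1) t ≤ D := by
            have := hC2 t ht
            have := hC1 t ht
            have : Nn (k + 2) t ≤ max C2 0 := le_max_of_le_left (hC2 t ht)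
            have : Nn (k + 1) t ≤ max C1 0 := le_max_of_le_left (hC1 t ht)
            calc Nn (k + 2) t + Nn (k + 1) t
                ≤ max C2 0 + max C1 0 :=
                  add_le_add (le_max_of_le_left (hC2 t ht)) (le_max_of_le_left (hC1 t ht))
              _ = D := rfl
          calc (Nn (k + 1) t) ^ 2
              ≤ c0 * Nn k t * (Nn (k + 2) t + Nn (k + 1) t) := hinterp k t
            _ ≤ c0 * (C * Real.exp (-(mu / 2 ^ k) * t)) * D := by
                apply mul_le_mul
                · exact mul_le_mul_of_nonneg_left (h t ht) hc0
                · exact hsum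
                · have := hnonneg (k + 2) t; have := hnonneg (k + 1) t; linarith
                · positivity
            _ = (c0 * C * D) * Real.exp (-(mu / 2 ^ k) * t) := by ring
        have h2 : Nn (k + 1) t ≤ Real.sqrt ((c0 * C * D) * Real.exp (-(mu / 2 ^ k) * t)) := by
          have := Real.sqrt_le_sqrt h1
          rwa [Real.sqrt_sq (hnonneg (k + 1) t)] at this
        have h3 : Real.sqrt ((c0 * C * D) * Real.exp (-(mu / 2 ^ k) * t))
            = Real.sqrt (c0 * C * D) * Real.exp (-(mu / 2 ^ (k + 1)) * t) := by
          rw [Real.sqrt_mul (by positivity), ← Real.exp_half]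
          ring_nf
        rw [h3] at h2
        exact h2
  intro k hk lamk hlamk hlamk'
  obtain ⟨C, hC, h⟩ := key k
  refine ⟨C, fun t ht => ?_⟩
  refine (h t ht).trans ?_
  apply mul_le_mul_of_nonneg_left _ hC
  apply Real.exp_le_exp.mpr
  have ht0 : (0:ℝ) ≤ t := le_trans zero_le_one ht
  nlinarith [hlamk'.le]
end
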